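/- In the fresh-place construction for the always-occurs check: any occurrence sequence of S' = (P ∪ {p'}, T, F ∪ {(p',t)}, λ, M ⊎ [p']) that leads to the marking [p', o] is, when regarded as a transition sequence, an execution of S that does not contain t; conversely, any execution of S not containing t is an occurrence sequence of S' leading to [p', o]. -/

import Mathlib

/-- A Petri net (system) over places `P` and transitions `T`: for each transition its
preset (input places), postset (output places), and a label. -/
structure PetriNet (P T : Type) where
  pre : T → Finset P
  post : T → Finset P
  lab : T → String

/-- A transition is enabled at marking `M` iff every input place holds at least one token. -/
def Enabled {P T : Type} (N : PetriNet P T) (M : Multiset P) (t : T) : Prop :=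
  ∀ p ∈ N.pre t, p ∈ M

/-- Firing `t` consumes one token from each input place and produces one on each output place. -/
def fire {P T : Type} [DecidableEq P] (N : PetriNet P T) (M : Multiset P) (t : T) :
    Multiset P :=
  M - (N.pre t).val + (N.post t).val

/-- `OccSeq N M σ M'`: `σ` is an occurrence sequence of `N` leading from marking `M`
to marking `M'`. -/
inductive OccSeq {P T : Type} [DecidableEq P] (N : PetriNet P T) :
    Multiset P → List T → Multiset P → Prop
  | nil (M : Multiset P) : OccSeq N M [] M
  | cons {M M' : Multiset P} {t : T} {ts : List T} :
      Enabled N M t → OccSeq N (fire N M t) ts M' → OccSeq N M (t :: ts) M'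

/-- The net `S'`: a fresh place `p' = none` is added as an extra input place of
transition `t` (arc `(p', t)`), with one extra initial token on `p'`. -/
def extendAlwaysOccurs {P T : Type} [DecidableEq P] [DecidableEq T]
    (N : PetriNet P T) (t : T) : PetriNet (Option P) T where
  pre := fun u =>
    if u = t then insert none ((N.pre u).image some) else (N.pre u).image some
  post := fun u => (N.post u).image some
  lab := N.lab

/-! The fresh place `p'` (encoded as `none`) starts with one token, is consumed only by `t` and
is never refilled, so an occurrence sequence of `S'` that still has a token on `p'` at the end
never fires `t`. Away from `t`, `S'` behaves exactly like `S` with the token on `p'` carried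
along, so occurrence sequences of `S` avoiding `t` are those of `S'` between the lifted
markings. -/

section

variable {P T : Type} [DecidableEq P] {N : PetriNet P T}

theorem OccSeq.nil_iff {M M' : Multiset P} : OccSeq N M [] M' ↔ M = M' :=
  ⟨fun h => by cases h; rfl, fun h => h ▸ .nil M⟩

theorem OccSeq.cons_iff {M M' : Multiset P} {u : T} {σ : List T} :
    OccSeq N M (u :: σ) M' ↔ Enabled N M u ∧ OccSeq N (fire N M u) σ M' :=
  ⟨fun h => by cases h with | cons hen hrest => exact ⟨hen, hrest⟩, fun h => .cons h.1 h.2⟩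

end

section

variable {P T : Type} [DecidableEq P] [DecidableEq T] {N : PetriNet P T} {t : T}

theorem count_none_pre_extendAlwaysOccurs (u : T) :
    ((extendAlwaysOccurs N t).pre u).val.count none = if u = t then 1 else 0 := by
  split_ifs with hu <;> simp [extendAlwaysOccurs, hu]

theorem count_none_post_extendAlwaysOccurs (u : T) :
    ((extendAlwaysOccurs N t).post u).val.count none = 0 := by
  simp [extendAlwaysOccurs]

theorem count_none_fire_extendAlwaysOccurs {M : Multiset (Option P)} {u : T}
    (hen : Enabled (extendAlwaysOccurs N t) M u) :
    (fire (extendAlwaysOccurs N t) M u).count none + (if u = t then 1 else 0) = M.count none := by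
  simp only [fire, Multiset.count_add, Multiset.count_sub, count_none_pre_extendAlwaysOccurs,
    count_none_post_extendAlwaysOccurs]
  split_ifs with hu
  · have := Multiset.count_pos.2 (hen none (by simp [extendAlwaysOccurs, hu]))
    omega
  · simp

theorem OccSeq.count_none_add_count {M M' : Multiset (Option P)} {σ : List T}
    (h : OccSeq (extendAlwaysOccurs N t) M σ M') : M'.count none + σ.count t = M.count none := by
  induction h with
  | nil => simp
  | cons hen _ ih =>
    rw [← count_none_fire_extendAlwaysOccurs hen, ← ih]
    simp [List.count_cons, add_assoc]

theorem enabled_extendAlwaysOccurs_iff {M : Multiset P} {u : T} (hu : u ≠ t) :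
    Enabled (extendAlwaysOccurs N t) (M.map some + {none}) u ↔ Enabled N M u := by
  simp [Enabled, extendAlwaysOccurs, hu]

theorem fire_extendAlwaysOccurs {M : Multiset P} {u : T} (hu : u ≠ t) :
    fire (extendAlwaysOccurs N t) (M.map some + {none}) u = (fire N M u).map some + {none} := by
  simp only [fire, extendAlwaysOccurs, if_neg hu,
    Finset.image_val_of_injOn (Option.some_injective P).injOn]
  ext (_ | p)
  · simp
  · simp [Multiset.count_map_eq_count' _ _ (Option.some_injective P)]

theorem occSeq_extendAlwaysOccurs_iff {M M' : Multiset P} {σ : List T} (hσ : t ∉ σ) :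
    OccSeq (extendAlwaysOccurs N t) (M.map some + {none}) σ (M'.map some + {none}) ↔
      OccSeq N M σ M' := by
  induction σ generalizing M with
  | nil =>
    simp only [OccSeq.nil_iff, add_left_inj, (Multiset.map_injective (Option.some_injective P)).eq_iff]
  | cons u σ ih =>
    have hu : u ≠ t := fun h => hσ (h ▸ List.mem_cons_self)
    rw [OccSeq.cons_iff, OccSeq.cons_iff, enabled_extendAlwaysOccurs_iff hu,
      fire_extendAlwaysOccurs hu, ih (mt (List.mem_cons_of_mem u) hσ)]

end

/-- Any occurrence sequence of `S'` from `M ⊎ [p']` to `[p', o]` is an execution of `S`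
not containing `t`; conversely, any execution of `S` not containing `t` is such an
occurrence sequence of `S'`. -/
theorem extendAlwaysOccurs_occSeq_characterization {P T : Type} [DecidableEq P]
    [DecidableEq T] (N : PetriNet P T) (M : Multiset P) (o : P) (t : T) :
    (∀ σ : List T,
        OccSeq (extendAlwaysOccurs N t) (M.map some + {none}) σ
          ({none, some o} : Multiset (Option P)) →
        OccSeq N M σ {o} ∧ t ∉ σ) ∧
    (∀ σ : List T, OccSeq N M σ {o} → t ∉ σ →
        OccSeq (extendAlwaysOccurs N t) (M.map some + {none}) σ
          ({none, some o} : Multiset (Option P))) := by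
  have hfinal : ({none, some o} : Multiset (Option P)) = ({o} : Multiset P).map some + {none} :=
    Multiset.cons_swap _ _ _
  refine ⟨fun σ h => ?_, fun σ h ht => ?_⟩
  · have ht : t ∉ σ := List.count_eq_zero.1 (by simpa using h.count_none_add_count)
    rw [hfinal, occSeq_extendAlwaysOccurs_iff ht] at h
    exact ⟨h, ht⟩
  · rw [hfinal, occSeq_extendAlwaysOccurs_iff ht]
    exact h
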